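/- arXiv:2508.16782 — 5 statements merged into one kernel-verified Lean document; each statement's English description precedes it below -/
import Mathlib

section
/- Let P be a ground normal program over a type A of atoms and let (Snf, St) be a pair of subsets of A such that: (1) for every clause (h, pos, neg) ∈ P, if pos ⊆ St and neg ∩ Snf = ∅ then h ∈ St; and (2) every atom a ∈ Snf is covered by P w.r.t. (Snf, St), i.e. there is a clause (a, pos, neg) ∈ P with pos ⊆ Snf and neg ∩ St = ∅. Let (T*, F*) be the Fitting model of P (the least fixed point of the Fitting operator Φ_P). Then T* ⊆ St and F* ∩ Snf = ∅. -/
/-!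
Read `(St, Snfᶜ)` as a candidate approximation (true atoms, false atoms). Condition (1) says
that `Φ_P` derives no new true atom outside `St`, and condition (2) says that `Φ_P` never
declares an atom of `Snf` false, since its covering clause has its positive body disjoint
from `Snfᶜ` and its negative body disjoint from `St`. So `(St, Snfᶜ)` is a pre-fixed point of the
monotone operator `Φ_P`, and by Knaster–Tarski the least fixed point lies below it.
-/

/-- The Fitting operator `Φ_P` of a ground normal program `P` (a clause is a triple
`(h, pos, neg)` of a head and the finite sets of atoms occurring positively resp.
negatively in the body).  It maps a pair `(T, F)` of sets of atoms to `(T₁, F₁)` where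
`T₁` is the set of heads of clauses whose positive body is contained in `T` and whose
negative body is contained in `F`, and `F₁` is the set of atoms `a` such that every
clause with head `a` has a positive body atom in `F` or a negative body atom in `T`. -/
def fitting {A : Type*} (P : Set (A × Finset A × Finset A)) (TF : Set A × Set A) :
    Set A × Set A :=
  ({h | ∃ pos neg : Finset A, (h, pos, neg) ∈ P ∧ ↑pos ⊆ TF.1 ∧ ↑neg ⊆ TF.2},
   {a | ∀ pos neg : Finset A, (a, pos, neg) ∈ P →
      (↑pos ∩ TF.2 : Set A) ≠ ∅ ∨ (↑neg ∩ TF.1 : Set A) ≠ ∅})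

theorem IsLeast.le_of_map_le {α : Type*} [CompleteLattice α] {f : α →o α} {x y : α}
    (hx : IsLeast (Function.fixedPoints f) x) (hy : f y ≤ y) : x ≤ y :=
  hx.unique f.isLeast_lfp ▸ f.lfp_le hy

theorem fitting_mono {A : Type*} (P : Set (A × Finset A × Finset A)) :
    Monotone (fitting P) := by
  rintro x y ⟨hT, hF⟩
  refine ⟨?_, ?_⟩
  · rintro h ⟨pos, neg, hP, hpos, hneg⟩
    exact ⟨pos, neg, hP, hpos.trans hT, hneg.trans hF⟩
  · intro a ha pos neg hP
    exact (ha pos neg hP).imp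
      (fun hne hempty => hne (Set.subset_eq_empty (Set.inter_subset_inter_right _ hF) hempty))
      (fun hne hempty => hne (Set.subset_eq_empty (Set.inter_subset_inter_right _ hT) hempty))

def fittingHom {A : Type*} (P : Set (A × Finset A × Finset A)) :
    (Set A × Set A) →o (Set A × Set A) :=
  ⟨fitting P, fitting_mono P⟩

section Prefixed

variable {A : Type*} (P : Set (A × Finset A × Finset A)) (Snf St : Set A)

theorem fitting_fst_subset
    (h1 : ∀ h pos neg, (h, pos, neg) ∈ P → ↑pos ⊆ St → (↑neg ∩ Snf : Set A) = ∅ →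
      h ∈ St) :
    (fitting P (St, Snfᶜ)).1 ⊆ St := by
  rintro h ⟨pos, neg, hP, hpos, hneg⟩
  exact h1 h pos neg hP hpos (Set.subset_compl_iff_disjoint_right.mp hneg).inter_eq

theorem fitting_snd_subset_compl
    (h2 : ∀ a ∈ Snf, ∃ pos neg : Finset A, (a, pos, neg) ∈ P ∧ ↑pos ⊆ Snf ∧
      (↑neg ∩ St : Set A) = ∅) :
    (fitting P (St, Snfᶜ)).2 ⊆ Snfᶜ := by
  intro a ha haSnf
  obtain ⟨pos, neg, hP, hpos, hneg⟩ := h2 a haSnf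
  have hpos' : (↑pos ∩ Snfᶜ : Set A) = ∅ :=
    Set.disjoint_iff_inter_eq_empty.mp (disjoint_compl_right.mono_left hpos)
  exact (ha pos neg hP).elim (· hpos') (· hneg)

end Prefixed

/-- Theorem 1 of the paper (correctness under Kunen/Fitting semantics), for ground
programs: if (1) every clause whose positive body is in `St` and whose negative body is
disjoint from `Snf` has its head in `St`, and (2) every atom of `Snf` is covered by `P`
w.r.t. `(Snf, St)`, then the Fitting model `(T*, F*)` (the least fixed point of `Φ_P`)
satisfies `T* ⊆ St` and `F* ∩ Snf = ∅`. -/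
theorem fitting_model_correct {A : Type*} (P : Set (A × Finset A × Finset A))
    (Snf St : Set A)
    (h1 : ∀ h pos neg, (h, pos, neg) ∈ P → ↑pos ⊆ St → (↑neg ∩ Snf : Set A) = ∅ →
      h ∈ St)
    (h2 : ∀ a ∈ Snf, ∃ pos neg : Finset A, (a, pos, neg) ∈ P ∧ ↑pos ⊆ Snf ∧
      (↑neg ∩ St : Set A) = ∅)
    (TF : Set A × Set A)
    (hTF : IsLeast {x | fitting P x = x} TF) :
    TF.1 ⊆ St ∧ TF.2 ∩ Snf = ∅ := by
  have hpre : fittingHom P (St, Snfᶜ) ≤ (St, Snfᶜ) :=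
    ⟨fitting_fst_subset P Snf St h1, fitting_snd_subset_compl P Snf St h2⟩
  obtain ⟨hT, hF⟩ : TF ≤ (St, Snfᶜ) := IsLeast.le_of_map_le (f := fittingHom P) hTF hpre
  exact ⟨hT, Set.disjoint_iff_inter_eq_empty.mp (Set.subset_compl_iff_disjoint_right.mp hF)⟩
end

section
/- Let P be a ground normal program over a type A of atoms and let (Snf, St) be a pair of subsets of A such that: (1) for every clause (h, pos, neg) ∈ P, if pos ⊆ St and neg ∩ Snf = ∅ then h ∈ St; and (2) there is a function |·| : Snf → W into a set W with a well-founded order ≺ such that for each a ∈ Snf there exists a clause (a, pos, neg) ∈ P with pos ⊆ Snf, neg ∩ St = ∅, and |b| ≺ |a| for every b ∈ pos. Then the well-founded model of P is correct w.r.t. (Snf, St): lfp(Γ_P²) ⊆ St, and Snf ⊆ gfp(Γ_P²) (i.e. no atom of Snf is false in the well-founded model). -/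
/-!
Two facts about `Γ_P` drive the proof. Condition (2) says that `Snf` is supported by
clauses whose negative bodies avoid `St`, along a well-founded order, so well-founded
induction gives `Snf ⊆ Γ_P(St)`. Condition (1) says that `St` is closed under the clauses
of the reduct `H(P, I)` whenever `Snf ⊆ I`, so `Γ_P(I) ⊆ St` for every such `I`.
Together they make `St` a pre-fixed point of `Γ_P²`, which bounds its least fixed point,
and `Γ_P(St)` a post-fixed point of `Γ_P²`, which lies below its greatest fixed point and
contains `Snf`.
-/

/-- Immediate consequence operator of a ground positive program. -/
def Tq {A : Type*} (Q : Set (A × Finset A)) : Set A →o Set A where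
  toFun J := {h | ∃ pos : Finset A, (h, pos) ∈ Q ∧ ↑pos ⊆ J}
  monotone' := by
    intro J K hJK h hh
    obtain ⟨pos, hm, hs⟩ := hh
    exact ⟨pos, hm, hs.trans hJK⟩

/-- Least Herbrand model of a ground positive program. -/
def leastModel {A : Type*} (Q : Set (A × Finset A)) : Set A := OrderHom.lfp (Tq Q)

/-- Gelfond–Lifschitz reduct of a ground normal program relative to `I`. -/
def reduct {A : Type*} (P : Set (A × Finset A × Finset A)) (I : Set A) :
    Set (A × Finset A) :=
  {c | ∃ neg : Finset A, (c.1, c.2, neg) ∈ P ∧ (↑neg ∩ I : Set A) = ∅}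

/-- Gelfond–Lifschitz operator `Γ_P`. -/
def gamma {A : Type*} (P : Set (A × Finset A × Finset A)) (I : Set A) : Set A :=
  leastModel (reduct P I)

theorem gamma_antitone {A : Type*} (P : Set (A × Finset A × Finset A)) :
    Antitone (gamma P) := by
  intro I I' hII'
  apply OrderHom.lfp.monotone
  intro J h hh
  obtain ⟨pos, ⟨neg, hm, hneg⟩, hs⟩ := hh
  refine ⟨pos, ⟨neg, hm, ?_⟩, hs⟩
  apply Set.eq_empty_of_subset_empty
  rw [← hneg]
  exact Set.inter_subset_inter_right _ hII'

/-- The squared Gelfond–Lifschitz operator `Γ_P²`, which is monotone.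
An atom is true in the well-founded model of `P` iff it is in `lfp (Γ_P²)`,
and false iff it is not in `gfp (Γ_P²)`. -/
def gammaSq {A : Type*} (P : Set (A × Finset A × Finset A)) : Set A →o Set A where
  toFun I := gamma P (gamma P I)
  monotone' := fun _ _ h => gamma_antitone P (gamma_antitone P h)

section LeastModel

variable {A : Type*} {Q : Set (A × Finset A)}

theorem mem_leastModel_of_mem {h : A} {pos : Finset A} (hQ : (h, pos) ∈ Q)
    (hpos : ↑pos ⊆ leastModel Q) : h ∈ leastModel Q := by
  rw [leastModel, ← OrderHom.map_lfp]
  exact ⟨pos, hQ, hpos⟩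

theorem leastModel_subset_of_closed {S : Set A}
    (hS : ∀ h pos, (h, pos) ∈ Q → ↑pos ⊆ S → h ∈ S) : leastModel Q ⊆ S :=
  OrderHom.lfp_le _ fun _ ⟨pos, hQ, hpos⟩ => hS _ pos hQ hpos

end LeastModel

section Gamma

variable {A : Type*} {P : Set (A × Finset A × Finset A)}

theorem mem_reduct_of_subset {I J : Set A} (hIJ : I ⊆ J) {h : A} {pos : Finset A}
    (hJ : (h, pos) ∈ reduct P J) : (h, pos) ∈ reduct P I := by
  obtain ⟨neg, hP, hneg⟩ := hJ
  exact ⟨neg, hP, Set.subset_empty_iff.mp (hneg ▸ Set.inter_subset_inter_right _ hIJ)⟩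

theorem subset_gamma_of_wellFounded {S I : Set A} {r : S → S → Prop} (hr : WellFounded r)
    (hS : ∀ a : S, ∃ pos neg : Finset A, (a.1, pos, neg) ∈ P ∧ (↑neg ∩ I : Set A) = ∅ ∧
      ∃ hpos : ∀ b ∈ pos, b ∈ S, ∀ b, ∀ hb : b ∈ pos, r ⟨b, hpos b hb⟩ a) :
    S ⊆ gamma P I := by
  suffices ∀ a : S, a.1 ∈ gamma P I from fun a ha => this ⟨a, ha⟩
  intro a
  induction a using hr.induction with
  | _ a ih =>
    obtain ⟨pos, neg, hP, hneg, hpos, hlt⟩ := hS a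
    exact mem_leastModel_of_mem ⟨neg, hP, hneg⟩ fun b hb => ih _ (hlt b hb)

theorem gamma_subset_of_closed {Snf St I : Set A}
    (hSt : ∀ h pos neg, (h, pos, neg) ∈ P → ↑pos ⊆ St → (↑neg ∩ Snf : Set A) = ∅ → h ∈ St)
    (hI : Snf ⊆ I) : gamma P I ⊆ St :=
  leastModel_subset_of_closed fun h pos hred hpos =>
    have ⟨neg, hP, hneg⟩ := mem_reduct_of_subset hI hred
    hSt h pos neg hP hpos hneg

end Gamma

/-- Theorem 3 of the paper (correctness under the well-founded semantics), for ground
programs: if (1) every clause whose positive body is contained in `St` and whose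
negative body is disjoint from `Snf` has its head in `St`, and (2) there is a level
mapping `lvl : Snf → W` into a well-founded order such that every `a ∈ Snf` is covered
by a clause of `P` whose positive body atoms lie in `Snf` with strictly smaller level
and whose negative body is disjoint from `St`, then the well-founded model of `P` is
correct w.r.t. `(Snf, St)`: `lfp (Γ_P²) ⊆ St` and `Snf ⊆ gfp (Γ_P²)`. -/
theorem wf_model_correct {A : Type*} (P : Set (A × Finset A × Finset A))
    (Snf St : Set A)
    (h1 : ∀ h pos neg, (h, pos, neg) ∈ P → ↑pos ⊆ St → (↑neg ∩ Snf : Set A) = ∅ →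
      h ∈ St)
    (W : Type*) (r : W → W → Prop) (hr : WellFounded r)
    (lvl : {a : A // a ∈ Snf} → W)
    (h2 : ∀ a, ∀ ha : a ∈ Snf, ∃ pos neg : Finset A, (a, pos, neg) ∈ P ∧
      (↑neg ∩ St : Set A) = ∅ ∧
      ∃ hpos : ∀ b ∈ pos, b ∈ Snf,
        ∀ b, ∀ hb : b ∈ pos, r (lvl ⟨b, hpos b hb⟩) (lvl ⟨a, ha⟩)) :
    OrderHom.lfp (gammaSq P) ⊆ St ∧ Snf ⊆ OrderHom.gfp (gammaSq P) := by
  have hSnf : Snf ⊆ gamma P St :=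
    subset_gamma_of_wellFounded (InvImage.wf lvl hr) fun a => h2 a.1 a.2
  have hSq : gammaSq P St ⊆ St := gamma_subset_of_closed h1 hSnf
  have hpost : gamma P St ⊆ gammaSq P (gamma P St) := gamma_antitone P hSq
  exact ⟨OrderHom.lfp_le _ hSq, hSnf.trans (OrderHom.le_gfp _ hpost)⟩
end

section
/- Let P be a ground normal program over a type A of atoms and let (Snf, St) be a pair of subsets of A satisfying the correctness condition: for every clause (h, pos, neg) ∈ P, if pos ⊆ St and neg ∩ Snf = ∅ then h ∈ St. Then for every stable model I of P, if Snf ⊆ I then I ⊆ St. -/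
theorem leastModel_subset_of_Tq_subset {A : Type*} {Q : Set (A × Finset A)} {S : Set A}
    (h : Tq Q S ⊆ S) : leastModel Q ⊆ S :=
  OrderHom.lfp_le _ h

theorem Tq_mono_program {A : Type*} {Q Q' : Set (A × Finset A)} (h : Q ⊆ Q') (J : Set A) :
    Tq Q J ⊆ Tq Q' J := by
  rintro a ⟨pos, hmem, hpos⟩
  exact ⟨pos, h hmem, hpos⟩

theorem reduct_antitone {A : Type*} (P : Set (A × Finset A × Finset A)) :
    Antitone (reduct P) := by
  rintro I J hIJ c ⟨neg, hmem, hdisj⟩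
  refine ⟨neg, hmem, Set.subset_empty_iff.mp ?_⟩
  exact hdisj ▸ Set.inter_subset_inter_right _ hIJ

theorem Tq_reduct_subset {A : Type*} {P : Set (A × Finset A × Finset A)} {Snf St : Set A}
    (hSt : ∀ h pos neg, (h, pos, neg) ∈ P → ↑pos ⊆ St → (↑neg ∩ Snf : Set A) = ∅ → h ∈ St) :
    Tq (reduct P Snf) St ⊆ St := by
  rintro a ⟨pos, ⟨neg, hmem, hdisj⟩, hpos⟩
  exact hSt a pos neg hmem hpos hdisj

/-- Proposition 1 of the paper: if every clause of `P` whose positive body atoms are in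
`St` and whose negative body atoms avoid `Snf` has its head in `St`, then every stable
model `I` of `P` (i.e. `I = M_{H(P,I)}`) with `Snf ⊆ I` satisfies `I ⊆ St`. -/
theorem stable_model_correct {A : Type*} (P : Set (A × Finset A × Finset A))
    (Snf St : Set A)
    (h1 : ∀ h pos neg, (h, pos, neg) ∈ P → ↑pos ⊆ St → (↑neg ∩ Snf : Set A) = ∅ →
      h ∈ St)
    (I : Set A) (hI : I = leastModel (reduct P I)) (hSnf : Snf ⊆ I) :
    I ⊆ St := by
  have hclosed : Tq (reduct P I) St ⊆ St :=
    (Tq_mono_program (reduct_antitone P hSnf) St).trans (Tq_reduct_subset h1)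
  exact hI.subset.trans (leastModel_subset_of_Tq_subset hclosed)
end

section
/- Let t be a term whose set of variables has k ≥ 0 elements, in a first-order language that has at least one constant symbol (so ground terms exist). Let f be a function symbol of arity ≥ 1 that does not occur in t. Then there exists a ground instance tθ of t such that tθ is not unifiable with any term s satisfying both: (i) t is not an instance of s, and (ii) f does not occur in s. -/
/-- Terms of a first-order language with function symbols `F` of arities `ar`
(constants are the symbols of arity 0) and variables `V`. -/
inductive Term (F : Type*) (ar : F → ℕ) (V : Type*) where
  | var : V → Term F ar V
  | func : (f : F) → (Fin (ar f) → Term F ar V) → Term F ar V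

/-- Application of a substitution `θ` (a map from variables to terms) to a term. -/
def Term.subst {F : Type*} {ar : F → ℕ} {V : Type*} (θ : V → Term F ar V) :
    Term F ar V → Term F ar V
  | .var v => θ v
  | .func f args => .func f (fun i => (args i).subst θ)

/-- The variable `v` occurs in the term. -/
inductive Term.VarOccurs {F : Type*} {ar : F → ℕ} {V : Type*} (v : V) :
    Term F ar V → Prop
  | var : Term.VarOccurs v (.var v)
  | arg {f : F} {args : Fin (ar f) → Term F ar V} (i : Fin (ar f)) :
      Term.VarOccurs v (args i) → Term.VarOccurs v (.func f args)

/-- The function symbol `g` occurs in the term. -/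
inductive Term.FuncOccurs {F : Type*} {ar : F → ℕ} {V : Type*} (g : F) :
    Term F ar V → Prop
  | head {args : Fin (ar g) → Term F ar V} : Term.FuncOccurs g (.func g args)
  | arg {f : F} {args : Fin (ar f) → Term F ar V} (i : Fin (ar f)) :
      Term.FuncOccurs g (args i) → Term.FuncOccurs g (.func f args)

/-- A term is ground if no variable occurs in it. -/
def Term.Ground {F : Type*} {ar : F → ℕ} {V : Type*} (t : Term F ar V) : Prop :=
  ∀ v : V, ¬ t.VarOccurs v

/-!
Fix a constant `c` and encode the variables of `t` injectively as the ground terms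
`f^(n+1)(c)`; this gives the ground instance `tθ`. Suppose `tθ` is unified with an
`f`-free term `s` by `σ`, so `tθ = sσ`. Replacing every subterm of head `f` by the
variable it encodes undoes `θ` on `t`, and on the `f`-free term `s` it commutes with
substitution; hence it maps `sσ` to an instance of `s`, which therefore equals `t`.
-/

namespace Term

variable {F V : Type*} {ar : F → ℕ}

theorem subst_eq_self {θ : V → Term F ar V} {u : Term F ar V}
    (h : ∀ v, u.VarOccurs v → θ v = .var v) : u.subst θ = u := by
  induction u with
  | var v => exact h v .var
  | func g args ih =>
    simp only [subst, func.injEq, heq_eq_eq, true_and]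
    exact funext fun i => ih i fun v hv => h v (.arg i hv)

theorem subst_of_ground {u : Term F ar V} (h : u.Ground) (σ : V → Term F ar V) :
    u.subst σ = u :=
  subst_eq_self fun v hv => absurd hv (h v)

theorem ground_subst {θ : V → Term F ar V} (hθ : ∀ v, (θ v).Ground) (u : Term F ar V) :
    (u.subst θ).Ground := by
  induction u with
  | var v => exact hθ v
  | func g args ih =>
    rintro v (_ | ⟨i, hi⟩)
    exact ih i v hi

section ReplaceHeaded

variable [DecidableEq F]

def replaceHeaded (f : F) (r : Term F ar V → Term F ar V) : Term F ar V → Term F ar V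
  | .var v => .var v
  | .func g args =>
    if g = f then r (.func g args) else .func g fun i => (args i).replaceHeaded f r

theorem replaceHeaded_func_self (f : F) (r : Term F ar V → Term F ar V)
    (args : Fin (ar f) → Term F ar V) :
    (Term.func f args).replaceHeaded f r = r (.func f args) :=
  if_pos rfl

theorem replaceHeaded_subst {f : F} (r : Term F ar V → Term F ar V) (σ : V → Term F ar V)
    {s : Term F ar V} (hs : ¬ s.FuncOccurs f) :
    (s.subst σ).replaceHeaded f r = s.subst fun x => (σ x).replaceHeaded f r := by
  induction s with
  | var x => rfl
  | func g args ih =>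
    have hg : g ≠ f := by rintro rfl; exact hs .head
    simp only [subst, replaceHeaded, if_neg hg, func.injEq, heq_eq_eq, true_and]
    exact funext fun i => ih i fun h => hs (.arg i h)

end ReplaceHeaded

def tower {c : F} (hc : ar c = 0) (f : F) : ℕ → Term F ar V
  | 0 => .func c fun i => (Fin.cast hc i).elim0
  | n + 1 => .func f fun _ => tower hc f n

theorem tower_ground {c : F} (hc : ar c = 0) (f : F) (n : ℕ) :
    (tower hc f n : Term F ar V).Ground := by
  induction n with
  | zero => intro v h; cases h with | arg i _ => exact (Fin.cast hc i).elim0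
  | succ n ih => intro v h; cases h with | arg i hi => exact ih v hi

theorem tower_injective {c f : F} (hc : ar c = 0) (hf : 1 ≤ ar f) :
    Function.Injective (tower hc f : ℕ → Term F ar V) := by
  have hcf : c ≠ f := by rintro rfl; omega
  intro a b h
  induction a generalizing b with
  | zero => cases b <;> simp_all [tower]
  | succ a ih =>
    cases b with
    | zero => simp_all [tower]
    | succ b =>
      simp only [tower, func.injEq, heq_eq_eq, true_and] at h
      exact congrArg Nat.succ (ih (congrFun h ⟨0, hf⟩))

end Term

theorem Set.InjOn.exists_leftInvOn_var {F V : Type*} {ar : F → ℕ} {θ : V → Term F ar V}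
    {S : Set V} (hθ : S.InjOn θ) :
    ∃ r : Term F ar V → Term F ar V, ∀ v ∈ S, r (θ v) = .var v := by
  classical
  refine ⟨fun u => if h : ∃ v ∈ S, θ v = u then .var h.choose else u, fun v hv => ?_⟩
  have hex : ∃ w ∈ S, θ w = θ v := ⟨v, hv, rfl⟩
  dsimp only
  rw [dif_pos hex, hθ hex.choose_spec.1 hv hex.choose_spec.2]

theorem ground_instance_not_unifiable_func_general {F V : Type*} (ar : F → ℕ)
    (hconst : ∃ c : F, ar c = 0)
    (t : Term F ar V)
    (hfin : {v : V | t.VarOccurs v}.Finite)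
    (f : F) (hf : 1 ≤ ar f) (hfnot : ¬ t.FuncOccurs f) :
    ∃ θ : V → Term F ar V, (t.subst θ).Ground ∧
      ∀ s : Term F ar V,
        (¬ ∃ ρ : V → Term F ar V, s.subst ρ = t) →
        ¬ s.FuncOccurs f →
        ¬ ∃ σ : V → Term F ar V, (t.subst θ).subst σ = s.subst σ := by
  classical
  obtain ⟨c, hc⟩ := hconst
  obtain ⟨idx, hidx⟩ := Set.countable_iff_exists_injOn.mp hfin.countable
  let θ : V → Term F ar V := fun v => Term.tower hc f (idx v + 1)
  have hθ_inj : {v | t.VarOccurs v}.InjOn θ := fun v hv w hw h =>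
    hidx hv hw (Nat.succ_injective (Term.tower_injective hc hf h))
  obtain ⟨r, hr⟩ := hθ_inj.exists_leftInvOn_var
  have htθ : (t.subst θ).Ground := Term.ground_subst (fun v => Term.tower_ground hc f _) t
  have hdecode : (t.subst θ).replaceHeaded f r = t := by
    rw [Term.replaceHeaded_subst r θ hfnot]
    exact Term.subst_eq_self fun v hv => (Term.replaceHeaded_func_self f r _).trans (hr v hv)
  refine ⟨θ, htθ, fun s hnotinst hs ⟨σ, hσ⟩ => hnotinst ⟨fun x => (σ x).replaceHeaded f r, ?_⟩⟩
  rw [Term.subst_of_ground htθ] at hσ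
  rw [← Term.replaceHeaded_subst r σ hs, ← hσ, hdecode]

/-- The function-symbol case of Lemma 1 of the paper: let `t` be a term with finitely
many (`k ≥ 0`) variables, in a language with at least one constant, and let `f` be a
function symbol of arity `≥ 1` not occurring in `t`.  Then some ground instance `tθ` of
`t` is not unifiable with any term `s` such that (i) `t` is not an instance of `s` and
(ii) `f` does not occur in `s`. -/
theorem ground_instance_not_unifiable_func {F V : Type*} (ar : F → ℕ)
    (hconst : ∃ c : F, ar c = 0)
    (t : Term F ar V) (k : ℕ)
    (hfin : {v : V | t.VarOccurs v}.Finite)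
    (hk : {v : V | t.VarOccurs v}.ncard = k)
    (f : F) (hf : 1 ≤ ar f) (hfnot : ¬ t.FuncOccurs f) :
    ∃ θ : V → Term F ar V, (t.subst θ).Ground ∧
      ∀ s : Term F ar V,
        (¬ ∃ ρ : V → Term F ar V, s.subst ρ = t) →
        ¬ s.FuncOccurs f →
        ¬ ∃ σ : V → Term F ar V, (t.subst θ).subst σ = s.subst σ :=
  ground_instance_not_unifiable_func_general ar hconst t hfin f hf hfnot
end

section
/- Let V be a finite type (the positions of a two-person game) and mov : V → V → Prop a relation (the possible moves). On pairs (L, W) of subsets of V, the operator G(L, W) = ({u | ∀ v, mov u v → v ∈ W}, {u | ∃ v, mov u v ∧ v ∈ L}) is monotone for the componentwise inclusion order; let (L*, W*) be its least fixed point (the losing and winning positions). Let the atom type be A = (V × V) ⊕ V, writing atoms as mv(u, v) and w(u). Consider the ground normal program WIN consisting of: the facts (mv(u, v), ∅, ∅) for all u, v ∈ V with mov u v, and the clauses (w(u), {mv(u, v)}, {w(v)}) for all u, v ∈ V. Then for every u ∈ V: w(u) ∈ lfp(Γ_WIN²) if and only if u ∈ W*, and w(u) ∉ gfp(Γ_WIN²)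 if and only if u ∈ L* (i.e. in the well-founded model of WIN, w(u) is true exactly for the winning positions and false exactly for the losing positions). -/
/-- Atoms of the game program: `mv(u,v)` is `Sum.inl (u,v)` and `w(u)` is
`Sum.inr u`. -/
abbrev WAtom (V : Type*) := (V × V) ⊕ V

/-- The ground instantiation of the program `{ w(U) ← mov(U,V), ¬w(V). }` together
with the move facts. -/
def WIN {V : Type*} (mov : V → V → Prop) :
    Set (WAtom V × Finset (WAtom V) × Finset (WAtom V)) :=
  {cl | ∃ u v, mov u v ∧ cl = (Sum.inl (u, v), ∅, ∅)} ∪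
  {cl | ∃ u v, cl = (Sum.inr u, {Sum.inl (u, v)}, {Sum.inr v})}

/-- The operator computing the losing and winning positions of the game: a position is
losing if every move from it leads to a winning one, and winning if some move from it
leads to a losing one. -/
def gameOp {V : Type*} (mov : V → V → Prop) (LW : Set V × Set V) : Set V × Set V :=
  ({u | ∀ v, mov u v → v ∈ LW.2}, {u | ∃ v, mov u v ∧ v ∈ LW.1})

/-!
In every interpretation `I`, the reduct `H(WIN, I)` consists of the move facts and the rules
`w(u) ← mv(u, v)` with `w(v) ∉ I`, so `Γ(I)` interprets `mv` as the move relation and `w` as the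
positions with a move to some `v` such that `w(v) ∉ I`. Hence, on such interpretations, `Γ²` acts
on the `w`-part as `f = existsMove ∘ forallMove`, and `lfp Γ²`, `gfp Γ²` correspond to `lfp f`,
`gfp f`. The least fixed point of the game operator is `(L*, W*) = (forallMove (lfp f), lfp f)`,
and by De Morgan duality `forallMove (lfp f) = lfp (forallMove ∘ existsMove)` is the complement
of `gfp f`.
-/

namespace OrderHom

variable {α β : Type*} [CompleteLattice α] [CompleteLattice β]

theorem lfp_eq_of_semiconj (e : α ↪o β) {f : α →o α} {F : β →o β}
    (hcomm : ∀ a, F (e a) = e (f a)) (hrange : ∀ b, F b ∈ Set.range e) :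
    F.lfp = e f.lfp := by
  refine le_antisymm (lfp_le_fixed _ (by rw [hcomm, f.map_lfp])) ?_
  obtain ⟨a, ha⟩ := hrange F.lfp
  rw [F.map_lfp] at ha
  have hfix : f a = a := e.injective (by rw [← hcomm, ha, F.map_lfp])
  rw [← ha]
  exact e.monotone (lfp_le_fixed _ hfix)

theorem gfp_eq_of_semiconj (e : α ↪o β) {f : α →o α} {F : β →o β}
    (hcomm : ∀ a, F (e a) = e (f a)) (hrange : ∀ b, F b ∈ Set.range e) :
    F.gfp = e f.gfp :=
  lfp_eq_of_semiconj (f := f.dual) (F := F.dual) e.dual hcomm hrange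

theorem compl_gfp_eq_lfp {γ : Type*} [CompleteBooleanAlgebra γ] {f g : γ →o γ}
    (h : ∀ a, f aᶜ = (g a)ᶜ) : f.gfpᶜ = g.lfp := by
  have := lfp_eq_of_semiconj (OrderIso.compl γ).toOrderEmbedding (f := g) (F := f.dual) h
    (fun b => (OrderIso.compl γ).surjective _)
  exact compl_eq_comm.mpr (congrArg OrderDual.ofDual this).symm

theorem isLeast_prod_swap_fixedPoints (g : β →o α) (h : α →o β) :
    IsLeast {p : α × β | (g p.2, h p.1) = p} (g (h.comp g).lfp, (h.comp g).lfp) := by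
  refine ⟨?_, ?_⟩
  · exact Prod.ext rfl ((h.comp g).map_lfp)
  · rintro ⟨x, y⟩ hxy
    simp only [Set.mem_ofPred_eq, Prod.mk.injEq] at hxy
    have hy : (h.comp g).lfp ≤ y := lfp_le_fixed _ (by simp only [comp_coe,
      Function.comp_apply, hxy.1, hxy.2])
    exact ⟨hxy.1 ▸ g.monotone hy, hy⟩

end OrderHom

section Game

variable {V : Type*} (mov : V → V → Prop)

def existsMove : Set V →o Set V where
  toFun S := {u | ∃ v, mov u v ∧ v ∈ S}
  monotone' _ _ h _ := fun ⟨v, huv, hv⟩ => ⟨v, huv, h hv⟩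

def forallMove : Set V →o Set V where
  toFun S := {u | ∀ v, mov u v → v ∈ S}
  monotone' _ _ h _ hu v huv := h (hu v huv)

@[simp]
theorem mem_existsMove {S : Set V} {u : V} :
    u ∈ existsMove mov S ↔ ∃ v, mov u v ∧ v ∈ S :=
  Iff.rfl

@[simp]
theorem mem_forallMove {S : Set V} {u : V} :
    u ∈ forallMove mov S ↔ ∀ v, mov u v → v ∈ S :=
  Iff.rfl

theorem existsMove_compl (S : Set V) : existsMove mov Sᶜ = (forallMove mov S)ᶜ := by
  ext u; simp

theorem forallMove_compl (S : Set V) : forallMove mov Sᶜ = (existsMove mov S)ᶜ := by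
  ext u; simp

theorem compl_gfp_existsMove_comp_forallMove :
    ((existsMove mov).comp (forallMove mov)).gfpᶜ =
      ((forallMove mov).comp (existsMove mov)).lfp :=
  OrderHom.compl_gfp_eq_lfp fun S => by
    simp only [OrderHom.comp_coe, Function.comp_apply, forallMove_compl, existsMove_compl]

theorem gameOp_monotone : Monotone (gameOp mov) :=
  fun _ _ h => ⟨(forallMove mov).monotone h.2, (existsMove mov).monotone h.1⟩

theorem isLeast_fixedPoints_gameOp :
    IsLeast {x | gameOp mov x = x}
      (forallMove mov ((existsMove mov).comp (forallMove mov)).lfp,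
        ((existsMove mov).comp (forallMove mov)).lfp) :=
  OrderHom.isLeast_prod_swap_fixedPoints (forallMove mov) (existsMove mov)

def gameInterp : Set V ↪o Set (WAtom V) :=
  OrderEmbedding.ofMapLEIff (fun W => {a | a.elim (fun p => mov p.1 p.2) (· ∈ W)}) fun W W' =>
    ⟨fun h u hu => h (a := Sum.inr u) hu, fun h a => by
      rcases a with p | u
      exacts [id, fun hu => h hu]⟩

@[simp]
theorem inl_mem_gameInterp {W : Set V} {u v : V} :
    (Sum.inl (u, v) : WAtom V) ∈ gameInterp mov W ↔ mov u v := Iff.rfl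

@[simp]
theorem inr_mem_gameInterp {W : Set V} {u : V} :
    (Sum.inr u : WAtom V) ∈ gameInterp mov W ↔ u ∈ W := Iff.rfl

theorem inr_preimage_gameInterp (W : Set V) : Sum.inr ⁻¹' (gameInterp mov W) = W := rfl

end Game

section WIN

variable {V : Type*} (mov : V → V → Prop) (I J : Set (WAtom V))

theorem inl_mem_Tq_reduct_WIN {u v : V} :
    (Sum.inl (u, v) : WAtom V) ∈ Tq (reduct (WIN mov) I) J ↔ mov u v := by
  simp [Tq, reduct, WIN]

theorem inr_mem_Tq_reduct_WIN {u : V} :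
    (Sum.inr u : WAtom V) ∈ Tq (reduct (WIN mov) I) J ↔
      ∃ v, (Sum.inl (u, v) : WAtom V) ∈ J ∧ (Sum.inr v : WAtom V) ∉ I := by
  simp [Tq, reduct, WIN, and_comm]

/-- The rule bodies of the reduct consist of move facts only. -/
theorem Tq_Tq_reduct_WIN :
    Tq (reduct (WIN mov) I) (Tq (reduct (WIN mov) I) J) =
      gameInterp mov (existsMove mov (Sum.inr ⁻¹' I)ᶜ) := by
  ext (⟨u, v⟩ | u)
  · simp only [inl_mem_Tq_reduct_WIN, inl_mem_gameInterp]
  · simp only [inr_mem_Tq_reduct_WIN, inl_mem_Tq_reduct_WIN, inr_mem_gameInterp]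
    rfl

theorem gamma_WIN : gamma (WIN mov) I = gameInterp mov (existsMove mov (Sum.inr ⁻¹' I)ᶜ) := by
  let T := Tq (reduct (WIN mov) I)
  calc gamma (WIN mov) I = T (T T.lfp) := by rw [T.map_lfp, T.map_lfp]; rfl
    _ = _ := Tq_Tq_reduct_WIN mov I _

theorem gammaSq_WIN :
    gammaSq (WIN mov) I =
      gameInterp mov ((existsMove mov).comp (forallMove mov) (Sum.inr ⁻¹' I)) := by
  change gamma (WIN mov) (gamma (WIN mov) I) = _
  rw [gamma_WIN, gamma_WIN, inr_preimage_gameInterp, ← forallMove_compl, compl_compl]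
  rfl

theorem gammaSq_WIN_gameInterp (W : Set V) :
    gammaSq (WIN mov) (gameInterp mov W) =
      gameInterp mov ((existsMove mov).comp (forallMove mov) W) := by
  rw [gammaSq_WIN, inr_preimage_gameInterp]

theorem lfp_gammaSq_WIN :
    (gammaSq (WIN mov)).lfp = gameInterp mov ((existsMove mov).comp (forallMove mov)).lfp :=
  OrderHom.lfp_eq_of_semiconj _ (gammaSq_WIN_gameInterp mov) fun I =>
    ⟨_, (gammaSq_WIN mov I).symm⟩

theorem gfp_gammaSq_WIN :
    (gammaSq (WIN mov)).gfp = gameInterp mov ((existsMove mov).comp (forallMove mov)).gfp :=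
  OrderHom.gfp_eq_of_semiconj _ (gammaSq_WIN_gameInterp mov) fun I =>
    ⟨_, (gammaSq_WIN mov I).symm⟩

end WIN

theorem WIN_correct_complete_general {V : Type*} (mov : V → V → Prop)
    (LW : Set V × Set V) (hLW : IsLeast {x | gameOp mov x = x} LW) :
    Monotone (gameOp mov) ∧
    ∀ u : V,
      ((Sum.inr u : WAtom V) ∈ OrderHom.lfp (gammaSq (WIN mov)) ↔ u ∈ LW.2) ∧
      ((Sum.inr u : WAtom V) ∉ OrderHom.gfp (gammaSq (WIN mov)) ↔ u ∈ LW.1) := by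
  obtain rfl := hLW.unique (isLeast_fixedPoints_gameOp mov)
  refine ⟨gameOp_monotone mov, fun u => ⟨?_, ?_⟩⟩
  · rw [lfp_gammaSq_WIN, inr_mem_gameInterp]
  · rw [gfp_gammaSq_WIN, inr_mem_gameInterp, ← Set.mem_compl_iff,
      compl_gfp_existsMove_comp_forallMove,
      OrderHom.map_lfp_comp (f := forallMove mov) (g := existsMove mov)]

/-- Example 4 of the paper's supplementary material: `gameOp` is monotone; and if
`(L*, W*)` is its least fixed point, then in the well-founded model of `WIN` the atom
`w(u)` is true (`w(u) ∈ lfp (Γ²)`) exactly for the winning positions `u ∈ W*` and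
false (`w(u) ∉ gfp (Γ²)`) exactly for the losing positions `u ∈ L*`. -/
theorem WIN_correct_complete {V : Type*} [Fintype V] (mov : V → V → Prop)
    (LW : Set V × Set V) (hLW : IsLeast {x | gameOp mov x = x} LW) :
    Monotone (gameOp mov) ∧
    ∀ u : V,
      ((Sum.inr u : WAtom V) ∈ OrderHom.lfp (gammaSq (WIN mov)) ↔ u ∈ LW.2) ∧
      ((Sum.inr u : WAtom V) ∉ OrderHom.gfp (gammaSq (WIN mov)) ↔ u ∈ LW.1) :=
  WIN_correct_complete_general mov LW hLW
end
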